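/- Let A = S + g·hᵀ and B = S + g·kᵀ be real n×n matrices in companion form. Suppose Z is a real symmetric positive semidefinite n×n matrix satisfying Π·S·Z·Π + Π·Z·Sᵀ·Π = 0, and let ξ = S·Z·g + Z·h. Assume ξ lies in the range of Z, that ⟨h−k, ξ⟩ > 0, and that ⟨ξ, Z⁺·ξ⟩ ≤ ⟨h−k, ξ⟩ (where Z⁺ is the Moore–Penrose pseudoinverse of Z). Define w = ⟨h−k, ξ⟩^{−1/2} · ξ. Then Z − w·wᵀ is positive semidefinite and the matrices X' = Z − w·wᵀ and Y' = w·wᵀ satisfy A·X' + X'·Aᵀ + B·Y' + Y'·Bᵀ = 0. -/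

import Mathlib

/-!
Write `ξ = Z y` and `c² = ⟨h − k, ξ⟩`. Since `Z Z⁺ Z = Z`, `⟨ξ, Z⁺ ξ⟩ = ⟨y, Z y⟩`, so
`w = Z (y / c)` with `⟨y / c, Z (y / c)⟩ ≤ 1`, and Cauchy–Schwarz for the form of `Z` gives
`⟨w, x⟩² ≤ ⟨x, Z x⟩`, i.e. `Z − w wᵀ ⪰ 0`.

For the equation, `A − B = g (h − k)ᵀ` and `⟨h − k, w⟩ w = ξ`, so
`(A − B) w wᵀ = g ξᵀ = g gᵀ Z Sᵀ + g hᵀ Z`. The left-hand side therefore equals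
`S Z Π + Π Z Sᵀ`, which is the hypothesis on `Z` because the last row of `S` vanishes
(`Π S = S`).
-/

open Matrix

/-- The `n × n` shift matrix `S` with `S_{i,i+1} = 1` and all other entries `0`. -/
def Smat (n : ℕ) : Matrix (Fin n) (Fin n) ℝ :=
  Matrix.of fun i j => if (i : ℕ) + 1 = (j : ℕ) then 1 else 0

/-- The last standard basis vector `g` of `ℝⁿ`. -/
def gvec (n : ℕ) : Fin n → ℝ := fun i => if (i : ℕ) = n - 1 then 1 else 0

/-- `Π = I − g·gᵀ`, the orthogonal projection onto the orthogonal complement of `g`. -/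
def Pimat (n : ℕ) : Matrix (Fin n) (Fin n) ℝ := 1 - vecMulVec (gvec n) (gvec n)

/-- `P` is the Moore–Penrose pseudoinverse of `M` (the four Penrose conditions). -/
def IsMoorePenroseInv {n : ℕ} (M P : Matrix (Fin n) (Fin n) ℝ) : Prop :=
  M * P * M = M ∧ P * M * P = P ∧ (M * P)ᵀ = M * P ∧ (P * M)ᵀ = P * M

namespace Matrix

variable {ι : Type*} [Fintype ι]

theorem dotProduct_mulVec_comm_of_isSymm {R : Type*} [CommSemiring R] {Z : Matrix ι ι R}
    (hZ : Z.IsSymm) (x y : ι → R) : x ⬝ᵥ Z *ᵥ y = y ⬝ᵥ Z *ᵥ x := by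
  rw [dotProduct_mulVec, ← mulVec_transpose, hZ.eq, dotProduct_comm]

theorem dotProduct_mulVec_mulVec_of_mul_mul_self {R : Type*} [CommSemiring R]
    {Z P : Matrix ι ι R} (hZ : Z.IsSymm) (hZP : Z * P * Z = Z) (y : ι → R) :
    Z *ᵥ y ⬝ᵥ P *ᵥ Z *ᵥ y = y ⬝ᵥ Z *ᵥ y := by
  calc Z *ᵥ y ⬝ᵥ P *ᵥ Z *ᵥ y = y ⬝ᵥ Zᵀ *ᵥ P *ᵥ Z *ᵥ y := by
        rw [dotProduct_mulVec y, vecMul_transpose]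
    _ = y ⬝ᵥ Z *ᵥ y := by rw [hZ.eq, mulVec_mulVec, mulVec_mulVec, hZP]

theorem PosSemidef.sub_vecMulVec_mulVec {Z : Matrix ι ι ℝ} (hZ : Z.PosSemidef) {y : ι → ℝ}
    (hy : y ⬝ᵥ Z *ᵥ y ≤ 1) : (Z - vecMulVec (Z *ᵥ y) (Z *ᵥ y)).PosSemidef := by
  classical
  have hsymm : Z.IsSymm := isHermitian_iff_isSymm.mp hZ.isHermitian
  have hnonneg : ∀ x, 0 ≤ x ⬝ᵥ Z *ᵥ x := by simpa using hZ.dotProduct_mulVec_nonneg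
  refine posSemidef_iff_dotProduct_mulVec.mpr ⟨hZ.isHermitian.sub ?_, fun x => ?_⟩
  · simpa using (posSemidef_vecMulVec_self_star (Z *ᵥ y)).isHermitian
  · have hcs := (toBilin' Z).apply_mul_apply_le_of_forall_zero_le
      (by simpa only [toBilin'_apply'] using hnonneg) y x
    simp only [toBilin'_apply', dotProduct_mulVec_comm_of_isSymm hsymm x y] at hcs
    rw [star_trivial, sub_mulVec, dotProduct_sub, dotProduct_mulVec x (vecMulVec _ _),
      vecMul_vecMulVec, smul_dotProduct, smul_eq_mul, sub_nonneg, dotProduct_comm _ x,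
      dotProduct_mulVec_comm_of_isSymm hsymm x y]
    nlinarith [mul_le_mul_of_nonneg_right hy (hnonneg x)]

theorem companion_lyapunov_eq_zero {R : Type*} [CommRing R] [DecidableEq ι]
    {S Z : Matrix ι ι R} {g h k w : ι → R} (hZ : Z.IsSymm)
    (hSZ : S * Z * (1 - vecMulVec g g) + (1 - vecMulVec g g) * Z * Sᵀ = 0)
    (hw : ((h - k) ⬝ᵥ w) • w = (S * Z) *ᵥ g + Z *ᵥ h) :
    (S + vecMulVec g h) * (Z - vecMulVec w w) + (Z - vecMulVec w w) * (S + vecMulVec g h)ᵀ +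
      (S + vecMulVec g k) * vecMulVec w w + vecMulVec w w * (S + vecMulVec g k)ᵀ = 0 := by
  have hDW : vecMulVec g (h - k) * vecMulVec w w =
      vecMulVec g g * (Z * Sᵀ) + vecMulVec g h * Z := by
    rw [vecMulVec_mul_vecMulVec, hw, vecMulVec_add, ← vecMul_transpose, ← vecMul_transpose,
      ← vecMulVec_mul, ← vecMulVec_mul, transpose_mul, hZ.eq]
  have hWD : vecMulVec w w * vecMulVec (h - k) g =
      S * Z * vecMulVec g g + Z * vecMulVec h g := by
    simpa only [transpose_mul, transpose_add, transpose_vecMulVec, hZ.eq, transpose_transpose,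
      Matrix.mul_assoc] using congrArg transpose hDW
  rw [show vecMulVec g k = vecMulVec g h - vecMulVec g (h - k) by rw [vecMulVec_sub]; abel]
  simp only [transpose_add, transpose_sub, transpose_vecMulVec]
  calc _ = S * Z * (1 - vecMulVec g g) + (1 - vecMulVec g g) * Z * Sᵀ
        + (vecMulVec g g * (Z * Sᵀ) + vecMulVec g h * Z - vecMulVec g (h - k) * vecMulVec w w)
        + (S * Z * vecMulVec g g + Z * vecMulVec h g - vecMulVec w w * vecMulVec (h - k) g) := by
        noncomm_ring
    _ = 0 := by rw [hSZ, hDW, hWD]; simp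

end Matrix

theorem gvec_vecMul_Smat (n : ℕ) : gvec n ᵥ* Smat n = 0 := by
  ext j
  simp only [vecMul, dotProduct, gvec, Smat, of_apply, Pi.zero_apply]
  refine Finset.sum_eq_zero fun i _ => ?_
  have := j.isLt
  split_ifs <;> first | omega | simp

theorem Pimat_mul_Smat (n : ℕ) : Pimat n * Smat n = Smat n := by
  rw [Pimat, Matrix.sub_mul, Matrix.one_mul, vecMulVec_mul, gvec_vecMul_Smat, vecMulVec_zero,
    sub_zero]

theorem transpose_Smat_mul_Pimat (n : ℕ) : (Smat n)ᵀ * Pimat n = (Smat n)ᵀ := by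
  rw [Pimat, Matrix.mul_sub, Matrix.mul_one, mul_vecMulVec, mulVec_transpose, gvec_vecMul_Smat,
    zero_vecMulVec, sub_zero]

theorem dotProduct_inv_sqrt_smul_smul {ι : Type*} [Fintype ι] {d ξ : ι → ℝ}
    (hpos : 0 < d ⬝ᵥ ξ) : (d ⬝ᵥ (√(d ⬝ᵥ ξ))⁻¹ • ξ) • (√(d ⬝ᵥ ξ))⁻¹ • ξ = ξ := by
  set c := √(d ⬝ᵥ ξ)
  have hc : c ≠ 0 := (Real.sqrt_pos.mpr hpos).ne'
  rw [dotProduct_smul, smul_eq_mul, smul_smul, ← Real.mul_self_sqrt hpos.le,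
    show c⁻¹ * (c * c) * c⁻¹ = 1 by field_simp, one_smul]

theorem Z_with_F_le_one_gives_solution_general {n : ℕ} (h k : Fin n → ℝ)
    (Z : Matrix (Fin n) (Fin n) ℝ) (hZ : Z.PosSemidef)
    (h1 : Pimat n * Smat n * Z * Pimat n + Pimat n * Z * (Smat n)ᵀ * Pimat n = 0)
    (ξ : Fin n → ℝ) (hξ : ξ = (Smat n * Z).mulVec (gvec n) + Z.mulVec h)
    (hrange : ∃ y : Fin n → ℝ, Z.mulVec y = ξ)
    (hpos : 0 < (h - k) ⬝ᵥ ξ)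
    (Zp : Matrix (Fin n) (Fin n) ℝ) (hZp : IsMoorePenroseInv Z Zp)
    (hF : ξ ⬝ᵥ Zp.mulVec ξ ≤ (h - k) ⬝ᵥ ξ)
    (w : Fin n → ℝ) (hw : w = (Real.sqrt ((h - k) ⬝ᵥ ξ))⁻¹ • ξ) :
    (Z - vecMulVec w w).PosSemidef ∧
      (Smat n + vecMulVec (gvec n) h) * (Z - vecMulVec w w) +
        (Z - vecMulVec w w) * (Smat n + vecMulVec (gvec n) h)ᵀ +
        (Smat n + vecMulVec (gvec n) k) * vecMulVec w w +
        vecMulVec w w * (Smat n + vecMulVec (gvec n) k)ᵀ = 0 := by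
  have hsymm : Z.IsSymm := isHermitian_iff_isSymm.mp hZ.isHermitian
  refine ⟨?_, companion_lyapunov_eq_zero hsymm ?_ ?_⟩
  · obtain ⟨y, rfl⟩ := hrange
    set c := √((h - k) ⬝ᵥ Z *ᵥ y)
    have hc : 0 < c := Real.sqrt_pos.mpr hpos
    have hyy : y ⬝ᵥ Z *ᵥ y ≤ c * c := by
      rw [← dotProduct_mulVec_mulVec_of_mul_mul_self hsymm hZp.1, Real.mul_self_sqrt hpos.le]
      exact hF
    rw [hw, ← mulVec_smul]
    refine hZ.sub_vecMulVec_mulVec ?_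
    rw [mulVec_smul, dotProduct_smul, smul_dotProduct, smul_eq_mul, smul_eq_mul, ← mul_assoc]
    calc c⁻¹ * c⁻¹ * (y ⬝ᵥ Z *ᵥ y) ≤ c⁻¹ * c⁻¹ * (c * c) := by gcongr
      _ = 1 := by field_simp
  · rwa [Pimat_mul_Smat, Matrix.mul_assoc (Pimat n * Z), transpose_Smat_mul_Pimat] at h1
  · rw [← hξ, hw]
    exact dotProduct_inv_sqrt_smul_smul hpos

/-- If `Z ≥ 0` satisfies `Π·S·Z·Π + Π·Z·Sᵀ·Π = 0`, `ξ = S·Z·g + Z·h` lies in the range of `Z`,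
`⟨h−k, ξ⟩ > 0` and `⟨ξ, Z⁺ξ⟩ ≤ ⟨h−k, ξ⟩`, then with `w = ⟨h−k, ξ⟩^{−1/2}·ξ`, the matrices
`X' = Z − w·wᵀ` and `Y' = w·wᵀ` satisfy `X' ≥ 0` and the Lyapunov intersection equation
for `A = S + g·hᵀ`, `B = S + g·kᵀ`. -/
theorem Z_with_F_le_one_gives_solution {n : ℕ} (hn : 0 < n) (h k : Fin n → ℝ)
    (Z : Matrix (Fin n) (Fin n) ℝ) (hZ : Z.PosSemidef)
    (h1 : Pimat n * Smat n * Z * Pimat n + Pimat n * Z * (Smat n)ᵀ * Pimat n = 0)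
    (ξ : Fin n → ℝ) (hξ : ξ = (Smat n * Z).mulVec (gvec n) + Z.mulVec h)
    (hrange : ∃ y : Fin n → ℝ, Z.mulVec y = ξ)
    (hpos : 0 < (h - k) ⬝ᵥ ξ)
    (Zp : Matrix (Fin n) (Fin n) ℝ) (hZp : IsMoorePenroseInv Z Zp)
    (hF : ξ ⬝ᵥ Zp.mulVec ξ ≤ (h - k) ⬝ᵥ ξ)
    (w : Fin n → ℝ) (hw : w = (Real.sqrt ((h - k) ⬝ᵥ ξ))⁻¹ • ξ) :
    (Z - vecMulVec w w).PosSemidef ∧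
      (Smat n + vecMulVec (gvec n) h) * (Z - vecMulVec w w) +
        (Z - vecMulVec w w) * (Smat n + vecMulVec (gvec n) h)ᵀ +
        (Smat n + vecMulVec (gvec n) k) * vecMulVec w w +
        vecMulVec w w * (Smat n + vecMulVec (gvec n) k)ᵀ = 0 :=
  Z_with_F_le_one_gives_solution_general h k Z hZ h1 ξ hξ hrange hpos Zp hZp hF w hw
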